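/- Let g : ℝ^p × ℝ^q → ℝ be such that g(x, ·) is μ-strongly convex and differentiable for each x, with y*(x) the unique minimizer of g(x, ·). If ∇_y g is L-Lipschitz in (x,y), then the mapping x ↦ y*(x) is (L/μ)-Lipschitz: ‖y*(x) − y*(x')‖ ≤ (L/μ)‖x − x'‖. -/
import Mathlib


open scoped RealInnerProductSpace

theorem stmt9 {p q : ℕ} (μ L : ℝ) (hμ : 0 < μ)
    (g : EuclideanSpace ℝ (Fin p) → EuclideanSpace ℝ (Fin q) → ℝ)
    (gy : EuclideanSpace ℝ (Fin p) → EuclideanSpace ℝ (Fin q) → EuclideanSpace ℝ (Fin q))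
    (ystar : EuclideanSpace ℝ (Fin p) → EuclideanSpace ℝ (Fin q))
    (hgrad : ∀ x y, HasGradientAt (g x) (gy x y) y)
    (hsc : ∀ x y y', g x y' ≥ g x y + ⟪gy x y, y' - y⟫ + μ / 2 * ‖y' - y‖ ^ 2)
    (hlip : ∀ x x' y y', ‖gy x y - gy x' y'‖ ≤ L * (‖x - x'‖ + ‖y - y'‖))
    (hopt : ∀ x, gy x (ystar x) = 0) :
    ∀ x x', ‖ystar x - ystar x'‖ ≤ L / μ * ‖x - x'‖ := by
  intro x x'
  rcases eq_or_ne x x' with hx | hx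
  · subst hx
    -- same x: ystar x is unique minimizer, show distance 0
    have h1 := hsc x (ystar x) (ystar x)
    simp only [hopt] at *
    simp
  · have hxpos : 0 < ‖x - x'‖ := by
      rw [norm_pos_iff]; exact sub_ne_zero_of_ne hx
    have hL : 0 ≤ L := by
      have h := hlip x x' (ystar x) (ystar x)
      have h2 : 0 ≤ ‖gy x (ystar x) - gy x' (ystar x)‖ := norm_nonneg _
      have h3 : ‖ystar x - ystar x‖ = (0:ℝ) := by simp
      nlinarith
    set y1 := ystar x with hy1
    set y2 := ystar x' with hy2
    have h1 := hsc x y1 y2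
    have h2 := hsc x y2 y1
    have hns : ‖y2 - y1‖ = ‖y1 - y2‖ := norm_sub_rev _ _
    have hmono : μ * ‖y1 - y2‖ ^ 2 ≤ ⟪gy x y1 - gy x y2, y1 - y2⟫ := by
      have e1 : ⟪gy x y1 - gy x y2, y1 - y2⟫
          = -⟪gy x y1, y2 - y1⟫ - ⟪gy x y2, y1 - y2⟫ := by
        rw [inner_sub_left]
        have : ⟪gy x y1, y2 - y1⟫ = -⟪gy x y1, y1 - y2⟫ := by
          rw [← inner_neg_right]; congr 1; abel
        rw [this]; ring
      have hns2 : ‖y2 - y1‖ ^ 2 = ‖y1 - y2‖ ^ 2 := by rw [hns]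
      rw [e1]; nlinarith
    have key : ⟪gy x y1 - gy x y2, y1 - y2⟫ = ⟪gy x' y2 - gy x y2, y1 - y2⟫ := by
      rw [hy1, hy2, hopt x, hopt x']
    have hcs : ⟪gy x' y2 - gy x y2, y1 - y2⟫ ≤ ‖gy x' y2 - gy x y2‖ * ‖y1 - y2‖ :=
      real_inner_le_norm _ _
    have hlipb : ‖gy x' y2 - gy x y2‖ ≤ L * ‖x - x'‖ := by
      have h := hlip x' x y2 y2
      have : ‖x' - x‖ = ‖x - x'‖ := norm_sub_rev _ _
      simpa [this] using h
    have chain : μ * ‖y1 - y2‖ ^ 2 ≤ L * ‖x - x'‖ * ‖y1 - y2‖ := by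
      calc μ * ‖y1 - y2‖ ^ 2 ≤ ⟪gy x y1 - gy x y2, y1 - y2⟫ := hmono
        _ = ⟪gy x' y2 - gy x y2, y1 - y2⟫ := key
        _ ≤ ‖gy x' y2 - gy x y2‖ * ‖y1 - y2‖ := hcs
        _ ≤ L * ‖x - x'‖ * ‖y1 - y2‖ := by nlinarith [norm_nonneg (y1 - y2)]
    rw [div_mul_eq_mul_div, le_div_iff₀ hμ]
    rcases eq_or_lt_of_le (norm_nonneg (y1 - y2)) with hz | hz
    · nlinarith
    · nlinarith
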